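/- arXiv:1805.12093 — 7 statements merged into one kernel-verified Lean document; each statement's English description precedes it below -/
import Mathlib

section
/- Let i be a qubit label and let e₁, e₂ be finite sets of qubit labels with i ∈ e₁, i ∈ e₂, and e₁ ∪ e₂ ≠ {i}. Then for every state |ψ⟩ of the qubits other than i, C_{e₁} H_i C_{e₂} H_i C_{e₁} (|+⟩_i ⊗ |ψ⟩) = |+⟩_i ⊗ C_{(e₁∪e₂)∖{i}} |ψ⟩, where C_{(e₁∪e₂)∖{i}} acts on the qubits other than i. (Lemma 1 of the Appendix.) -/
noncomputable section

/-- The state space of qubits labeled by `ι`: a vector is the family of its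
amplitudes in the computational basis `{|x⟩ : x : ι → Bool}`. -/
abbrev QState (ι : Type) := (ι → Bool) → ℂ

/-- The sign `(−1)^{∏_{i∈e} x_i}` of the generalized controlled-Z gate `C_e`
on the basis vector `|x⟩`. -/
def csign {ι : Type} (e : Finset ι) (x : ι → Bool) : ℂ :=
  if ∀ i ∈ e, x i = true then -1 else 1

/-- The generalized controlled-Z gate `C_e`, the diagonal unitary with
`C_e |x⟩ = (−1)^{∏_{i∈e} x_i} |x⟩`. -/
def Cgate {ι : Type} (e : Finset ι) (ψ : QState ι) : QState ι :=
  fun x => csign e x * ψ x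

/-- The Hadamard gate `H_i` on qubit `i`, acting as the identity on all other
qubits. -/
def Hgate {ι : Type} [DecidableEq ι] (i : ι) (ψ : QState ι) : QState ι :=
  fun x => (((Real.sqrt 2)⁻¹ : ℝ) : ℂ) *
    (ψ (Function.update x i false) +
      (if x i = true then -1 else 1) * ψ (Function.update x i true))

/-- The Pauli-X (bit flip) gate `X_i` on qubit `i`. -/
def Xgate {ι : Type} [DecidableEq ι] (i : ι) (ψ : QState ι) : QState ι :=
  fun x => ψ (Function.update x i (!(x i)))

/-- The generalized CNOT gate with control set `f` and target `t ∉ f`: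
it flips bit `t` of `x` exactly when `∏_{j∈f} x_j = 1`. -/
def CNOTgate {ι : Type} [DecidableEq ι] (f : Finset ι) (t : ι) (ψ : QState ι) : QState ι :=
  fun x => ψ (if ∀ j ∈ f, x j = true then Function.update x t (!(x t)) else x)

/-- `|+⟩^{⊗n}`, the uniform superposition `2^{−n/2} ∑_x |x⟩`. -/
def plusAll (ι : Type) [Fintype ι] : QState ι :=
  fun _ => (((Real.sqrt 2)⁻¹ : ℝ) : ℂ) ^ (Fintype.card ι)

/-- The computational-basis ket `|s⟩`. -/
def zketS {ι : Type} [Fintype ι] [DecidableEq ι] (s : ι → Bool) : QState ι :=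
  fun x => if x = s then 1 else 0

/-- The Pauli-X-basis product ket: qubit `i` is `|+⟩` if `s i = false` and
`|−⟩` if `s i = true`, where `|±⟩ = (|0⟩ ± |1⟩)/√2`. -/
def xketS {ι : Type} [Fintype ι] (s : ι → Bool) : QState ι :=
  fun x => ∏ i, ((((Real.sqrt 2)⁻¹ : ℝ) : ℂ) * (if s i && x i then -1 else 1))

/-- Tensor product of a state of the qubits `κ` with a state of the qubits `ι`. -/
def tensP {κ ι : Type} (φ : QState κ) (u : QState ι) : QState (κ ⊕ ι) :=
  fun x => φ (fun i => x (Sum.inl i)) * u (fun j => x (Sum.inr j))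

/-- The partial inner product `(⟨φ|_κ ⊗ I)`, sending a state of the qubits
`κ ⊕ ι` to a state of the remaining qubits `ι`. -/
def pinner {κ ι : Type} [Fintype κ] [DecidableEq κ] (φ : QState κ) (w : QState (κ ⊕ ι)) :
    QState ι :=
  fun y => ∑ b : κ → Bool, (starRingEnd ℂ) (φ b) * w (Sum.elim b y)

/-- Tensor product of a single-qubit state on qubit `i` with a state of the
remaining qubits. -/
def tensQ {ι : Type} [DecidableEq ι] (i : ι) (φ : Bool → ℂ) (ψ : QState {j : ι // j ≠ i}) :
    QState ι :=
  fun x => φ (x i) * ψ (fun j => x j.1)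

/-- The partial inner product over the single qubit `i`. -/
def pinner1 {ι : Type} [DecidableEq ι] (i : ι) (φ : Bool → ℂ) (w : QState ι) :
    QState {j : ι // j ≠ i} :=
  fun y => ∑ b : Bool, (starRingEnd ℂ) (φ b) * w (fun j => if h : j = i then b else y ⟨j, h⟩)

/-- The hypergraph state `∏_{e∈E} C_e |+⟩^{⊗|V|}` of the hypergraph `(V, E)`. -/
def hgState {ι : Type} [Fintype ι] (E : Finset (Finset ι)) : QState ι :=
  fun x => (∏ e ∈ E, csign e x) * plusAll ι x

/-- Sequential composition (operator product) of a list of operators. -/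
def seqComp {α : Type} (fs : List (α → α)) : α → α := fs.foldr (· ∘ ·) id
/-- Lemma 1 of the Appendix.  For a qubit `i` and finite sets
`e₁, e₂` of qubit labels with `i ∈ e₁`, `i ∈ e₂` and `e₁ ∪ e₂ ≠ {i}`, and any
state `ψ` of the qubits other than `i`,
`C_{e₁} H_i C_{e₂} H_i C_{e₁} (|+⟩_i ⊗ |ψ⟩) = |+⟩_i ⊗ C_{(e₁∪e₂)∖{i}} |ψ⟩`. -/
theorem lemma1_CCZ_sandwich {ι : Type} [DecidableEq ι] (i : ι) (e₁ e₂ : Finset ι)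
    (h1 : i ∈ e₁) (h2 : i ∈ e₂) (hne : e₁ ∪ e₂ ≠ {i}) (ψ : QState {j : ι // j ≠ i}) :
    Cgate e₁ (Hgate i (Cgate e₂ (Hgate i (Cgate e₁
        (tensQ i (fun _ => (((Real.sqrt 2)⁻¹ : ℝ) : ℂ)) ψ))))) =
      tensQ i (fun _ => (((Real.sqrt 2)⁻¹ : ℝ) : ℂ))
        (Cgate (Finset.subtype (fun j => j ≠ i) ((e₁ ∪ e₂).erase i)) ψ) := by

  funext x
  have ht : (((Real.sqrt 2)⁻¹ : ℝ) : ℂ) * (((Real.sqrt 2)⁻¹ : ℝ) : ℂ) = 1/2 := by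
    norm_cast
    rw [← mul_inv, Real.mul_self_sqrt (by norm_num)]
    norm_num
  have hψ : ∀ b, (fun (j : {j : ι // j ≠ i}) => Function.update x i b j.1)
      = (fun j => x j.1) := by
    intro b; funext j; exact Function.update_of_ne j.2 _ _
  have hc0 : ∀ e : Finset ι, i ∈ e → csign e (Function.update x i false) = 1 := by
    intro e he
    rw [csign, if_neg]
    intro h
    have := h i he
    rw [Function.update_self] at this
    exact Bool.false_ne_true this
  have hc1 : ∀ e : Finset ι, csign e (Function.update x i true)
      = if (∀ k ∈ e, k ≠ i → x k = true) then -1 else 1 := by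
    intro e
    unfold csign
    congr 1
    apply propext
    constructor
    · intro h k hk hki
      have := h k hk
      rwa [Function.update_of_ne hki] at this
    · intro h k hk
      by_cases hki : k = i
      · subst hki; exact Function.update_self ..
      · rw [Function.update_of_ne hki]; exact h k hk hki
  have hcx : csign e₁ x
      = if (x i = true ∧ ∀ k ∈ e₁, k ≠ i → x k = true) then -1 else 1 := by
    unfold csign
    congr 1
    apply propext
    constructor
    · intro h; exact ⟨h i h1, fun k hk _ => h k hk⟩
    · rintro ⟨hi, h⟩ k hk
      by_cases hki : k = i
      · subst hki; exact hi
      · exact h k hk hki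
  have hcr : csign (Finset.subtype (fun j => j ≠ i) ((e₁ ∪ e₂).erase i)) (fun j => x j.1)
      = if ((∀ k ∈ e₁, k ≠ i → x k = true) ∧ (∀ k ∈ e₂, k ≠ i → x k = true))
        then -1 else 1 := by
    unfold csign
    congr 1
    apply propext
    constructor
    · intro h
      constructor
      · intro k hk hki
        exact h ⟨k, hki⟩ (by simp [Finset.mem_subtype, Finset.mem_erase, hki, hk])
      · intro k hk hki
        exact h ⟨k, hki⟩ (by simp [Finset.mem_subtype, Finset.mem_erase, hki, hk])
    · rintro ⟨ha, hb⟩ ⟨k, hki⟩ hk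
      simp only [Finset.mem_subtype, Finset.mem_erase, Finset.mem_union] at hk
      rcases hk.2 with h | h
      · exact ha k h hki
      · exact hb k h hki
  simp only [Cgate, Hgate, tensQ, Function.update_self, Function.update_idem, hψ,
    hc0 e₁ h1, hc0 e₂ h2, hc1, hcx, hcr, Bool.false_eq_true, eq_self_iff_true, if_false, if_true]
  by_cases q1 : (∀ k ∈ e₁, k ≠ i → x k = true) <;>
    by_cases q2 : (∀ k ∈ e₂, k ≠ i → x k = true) <;>
    by_cases hxi : x i = true
  · simp only [if_pos q1, if_pos q2, if_pos hxi, if_pos (And.intro hxi q1),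
      if_pos (And.intro q1 q2)]
    linear_combination (-2 : ℂ) * (ψ fun j => x j.1) * (((Real.sqrt 2)⁻¹ : ℝ) : ℂ) * ht
  · simp only [if_pos q1, if_pos q2, if_neg hxi, if_neg (fun h => hxi h.1 :
      ¬(x i = true ∧ ∀ k ∈ e₁, k ≠ i → x k = true)), if_pos (And.intro q1 q2)]
    linear_combination (-2 : ℂ) * (ψ fun j => x j.1) * (((Real.sqrt 2)⁻¹ : ℝ) : ℂ) * ht
  · simp only [if_pos q1, if_neg q2, if_pos hxi, if_pos (And.intro hxi q1),
      if_neg (fun h => q2 h.2 : ¬((∀ k ∈ e₁, k ≠ i → x k = true) ∧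
        ∀ k ∈ e₂, k ≠ i → x k = true))]
    linear_combination (2 : ℂ) * (ψ fun j => x j.1) * (((Real.sqrt 2)⁻¹ : ℝ) : ℂ) * ht
  · simp only [if_pos q1, if_neg q2, if_neg hxi, if_neg (fun h => hxi h.1 :
      ¬(x i = true ∧ ∀ k ∈ e₁, k ≠ i → x k = true)),
      if_neg (fun h => q2 h.2 : ¬((∀ k ∈ e₁, k ≠ i → x k = true) ∧
        ∀ k ∈ e₂, k ≠ i → x k = true))]
    linear_combination (2 : ℂ) * (ψ fun j => x j.1) * (((Real.sqrt 2)⁻¹ : ℝ) : ℂ) * ht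
  · simp only [if_neg q1, if_pos q2, if_pos hxi, if_neg (fun h => q1 h.2 :
      ¬(x i = true ∧ ∀ k ∈ e₁, k ≠ i → x k = true)),
      if_neg (fun h => q1 h.1 : ¬((∀ k ∈ e₁, k ≠ i → x k = true) ∧
        ∀ k ∈ e₂, k ≠ i → x k = true))]
    linear_combination (2 : ℂ) * (ψ fun j => x j.1) * (((Real.sqrt 2)⁻¹ : ℝ) : ℂ) * ht
  · simp only [if_neg q1, if_pos q2, if_neg hxi, if_neg (fun h => q1 h.2 :
      ¬(x i = true ∧ ∀ k ∈ e₁, k ≠ i → x k = true)),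
      if_neg (fun h => q1 h.1 : ¬((∀ k ∈ e₁, k ≠ i → x k = true) ∧
        ∀ k ∈ e₂, k ≠ i → x k = true))]
    linear_combination (2 : ℂ) * (ψ fun j => x j.1) * (((Real.sqrt 2)⁻¹ : ℝ) : ℂ) * ht
  · simp only [if_neg q1, if_neg q2, if_pos hxi, if_neg (fun h => q1 h.2 :
      ¬(x i = true ∧ ∀ k ∈ e₁, k ≠ i → x k = true)),
      if_neg (fun h => q1 h.1 : ¬((∀ k ∈ e₁, k ≠ i → x k = true) ∧
        ∀ k ∈ e₂, k ≠ i → x k = true))]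
    linear_combination (2 : ℂ) * (ψ fun j => x j.1) * (((Real.sqrt 2)⁻¹ : ℝ) : ℂ) * ht
  · simp only [if_neg q1, if_neg q2, if_neg hxi, if_neg (fun h => q1 h.2 :
      ¬(x i = true ∧ ∀ k ∈ e₁, k ≠ i → x k = true)),
      if_neg (fun h => q1 h.1 : ¬((∀ k ∈ e₁, k ≠ i → x k = true) ∧
        ∀ k ∈ e₂, k ≠ i → x k = true))]
    linear_combination (2 : ℂ) * (ψ fun j => x j.1) * (((Real.sqrt 2)⁻¹ : ℝ) : ℂ) * ht
end
end

section
/- Let V be a finite set of qubits, a ∈ V, E a finite set of nonempty subsets of V with {a} ∉ E, and Ẽ a finite set of nonempty subsets of V∖{a} with Ẽ ∩ E = ∅. Let H_α = (V, E) and H_β = (V, E ∪ {{a}} ∪ Ẽ). Set E′ = {e ∈ E : a ∉ e} and A^α(a) = {e∖{a} : e ∈ E, a ∈ e}. Then H_a(|H_α⟩ + |H_β⟩) = √2 · ∏_{e′∈E′} C_{e′} · ∏_{e_a∈A^α(a)} ∏_{ẽ∈Ẽ} C_{e_a∪ẽ} · ∏_{ẽ∈Ẽ} C_{ẽ∪{a}}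 |+⟩^{⊗|V|}; in particular the equally weighted plus superposition of |H_α⟩ and |H_β⟩ is, up to the Hadamard gate on qubit a and normalization, again a hypergraph state. -/
noncomputable section

/-!
Evaluate both sides at a basis vector `|x⟩`. With `T = ∏_{ẽ∈Ẽ} C_ẽ`, which is diagonal with
eigenvalues `±1` and does not touch qubit `a`, one has `|H_β⟩ = Z_a T |H_α⟩`. So on the two basis
vectors that `H_a` mixes, the amplitudes of `|H_α⟩ + |H_β⟩` are those of `|H_α⟩` times `1 + T(x)`
(for `x_a = 0`) and `1 - T(x)` (for `x_a = 1`).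
If `T(x) = 1` only the first survives, and every `∏_{ẽ} C_{f ∪ ẽ}` acts trivially on `|x⟩`;
if `T(x) = -1` only the second survives, and `∏_{ẽ} C_{f ∪ ẽ}` acts on `|x⟩` as `C_f`, which
turns the right-hand side into `C_a ∏_{e ∋ a} C_{e∖{a}} ∏_{e ∌ a} C_e |+⟩` there.
-/

section CSign

variable {ι : Type}

lemma csign_congr (e : Finset ι) {x y : ι → Bool} (h : ∀ i ∈ e, x i = y i) :
    csign e x = csign e y := by
  unfold csign
  congr 1
  exact propext (forall₂_congr fun i hi => by rw [h i hi])

lemma csign_eq_one_or_neg_one (e : Finset ι) (x : ι → Bool) :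
    csign e x = 1 ∨ csign e x = -1 := by
  unfold csign
  split_ifs <;> simp

lemma prod_csign_eq_one_or_neg_one (S : Finset (Finset ι)) (x : ι → Bool) :
    ∏ e ∈ S, csign e x = 1 ∨ ∏ e ∈ S, csign e x = -1 := by
  classical
  induction S using Finset.induction_on with
  | empty => simp
  | insert e S _ ih =>
    rw [Finset.prod_insert ‹_›]
    rcases csign_eq_one_or_neg_one e x with h | h <;> rcases ih with h' | h' <;> simp [h, h']

lemma csign_singleton (i : ι) (x : ι → Bool) :
    csign {i} x = if x i = true then -1 else 1 := by
  simp [csign]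

variable [DecidableEq ι]

lemma csign_union_of_forall (f e : Finset ι) {x : ι → Bool} (hf : ∀ i ∈ f, x i = true) :
    csign (f ∪ e) x = csign e x := by
  unfold csign
  congr 1
  exact propext ⟨fun h i hi => h i (Finset.mem_union_right _ hi),
    fun h i hi => (Finset.mem_union.mp hi).elim (hf i) (h i)⟩

lemma csign_union_of_not_forall (f e : Finset ι) {x : ι → Bool} (hf : ¬ ∀ i ∈ f, x i = true) :
    csign (f ∪ e) x = 1 :=
  if_neg fun h => hf fun i hi => h i (Finset.mem_union_left _ hi)

lemma prod_csign_union_of_prod_eq_one (f : Finset ι) {Et : Finset (Finset ι)} {x : ι → Bool}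
    (hT : ∏ et ∈ Et, csign et x = 1) : ∏ et ∈ Et, csign (f ∪ et) x = 1 := by
  by_cases hf : ∀ i ∈ f, x i = true
  · simpa only [csign_union_of_forall f _ hf] using hT
  · exact Finset.prod_eq_one fun e _ => csign_union_of_not_forall f e hf

lemma prod_csign_union_of_prod_eq_neg_one (f : Finset ι) {Et : Finset (Finset ι)}
    {x : ι → Bool} (hT : ∏ et ∈ Et, csign et x = -1) :
    ∏ et ∈ Et, csign (f ∪ et) x = csign f x := by
  by_cases hf : ∀ i ∈ f, x i = true
  · rw [Finset.prod_congr rfl fun e _ => csign_union_of_forall f e hf, hT, csign, if_pos hf]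
  · rw [Finset.prod_eq_one fun e _ => csign_union_of_not_forall f e hf, csign, if_neg hf]

variable (a : ι) (x : ι → Bool)

lemma csign_update_of_notMem {e : Finset ι} (ha : a ∉ e) (b : Bool) :
    csign e (Function.update x a b) = csign e x :=
  csign_congr e fun _ hi => Function.update_of_ne (ne_of_mem_of_not_mem hi ha) _ _

lemma csign_update_false_of_mem {e : Finset ι} (ha : a ∈ e) :
    csign e (Function.update x a false) = 1 :=
  if_neg fun h => by simpa using h a ha

lemma csign_update_true_of_mem {e : Finset ι} (ha : a ∈ e) :
    csign e (Function.update x a true) = csign (e.erase a) x :=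
  calc csign e (Function.update x a true)
      = csign ({a} ∪ e.erase a) (Function.update x a true) := by
        rw [← Finset.insert_eq, Finset.insert_erase ha]
    _ = csign (e.erase a) (Function.update x a true) := csign_union_of_forall _ _ (by simp)
    _ = csign (e.erase a) x := csign_update_of_notMem a x (Finset.notMem_erase a e) true

lemma prod_csign_update_false (E : Finset (Finset ι)) :
    ∏ e ∈ E, csign e (Function.update x a false) = ∏ e ∈ E.filter (fun e => a ∉ e), csign e x := by
  rw [← Finset.prod_filter_mul_prod_filter_not E (fun e => a ∈ e),
    Finset.prod_eq_one fun e he => csign_update_false_of_mem a x (Finset.mem_filter.mp he).2,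
    one_mul]
  exact Finset.prod_congr rfl fun e he => csign_update_of_notMem a x (Finset.mem_filter.mp he).2 _

lemma prod_csign_update_true (E : Finset (Finset ι)) :
    ∏ e ∈ E, csign e (Function.update x a true) =
      (∏ e ∈ E.filter (fun e => a ∈ e), csign (e.erase a) x) *
        ∏ e ∈ E.filter (fun e => a ∉ e), csign e x := by
  rw [← Finset.prod_filter_mul_prod_filter_not E (fun e => a ∈ e)]
  congr 1
  · exact Finset.prod_congr rfl fun e he => csign_update_true_of_mem a x (Finset.mem_filter.mp he).2
  · exact Finset.prod_congr rfl fun e he => csign_update_of_notMem a x (Finset.mem_filter.mp he).2 _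

lemma prod_csign_update_of_forall_notMem {Et : Finset (Finset ι)} (h : ∀ e ∈ Et, a ∉ e)
    (b : Bool) : ∏ e ∈ Et, csign e (Function.update x a b) = ∏ e ∈ Et, csign e x :=
  Finset.prod_congr rfl fun e he => csign_update_of_notMem a x (h e he) b

end CSign

lemma hgState_union {ι : Type} [Fintype ι] [DecidableEq ι] {E F : Finset (Finset ι)}
    (h : Disjoint E F) (x : ι → Bool) :
    hgState (E ∪ F) x = (∏ e ∈ F, csign e x) * hgState E x := by
  unfold hgState
  rw [Finset.prod_union h]
  ring

lemma inv_sqrt_two_mul_two : (((Real.sqrt 2)⁻¹ : ℝ) : ℂ) * 2 = (Real.sqrt 2 : ℂ) := by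
  have h : Real.sqrt 2 ≠ 0 := by positivity
  push_cast
  field_simp
  exact_mod_cast (Real.sq_sqrt (by norm_num : (0 : ℝ) ≤ 2)).symm

theorem hypergraph_X_rule_plus_general {ι : Type} [Fintype ι] [DecidableEq ι] (a : ι)
    (E Et : Finset (Finset ι))
    (haE : ({a} : Finset ι) ∉ E)
    (hEt : ∀ e ∈ Et, e.Nonempty ∧ a ∉ e) (hdisj : Et ∩ E = ∅) :
    Hgate a (hgState E + hgState (E ∪ {({a} : Finset ι)} ∪ Et)) =
      (Real.sqrt 2 : ℂ) • (fun x =>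
        (∏ e ∈ E.filter (fun e => a ∉ e), csign e x) *
        ((∏ ea ∈ (E.filter (fun e => a ∈ e)).image (fun e => e.erase a),
            ∏ et ∈ Et, csign (ea ∪ et) x) *
        ((∏ et ∈ Et, csign (insert a et) x) * plusAll ι x))) := by
  have haEt : ∀ e ∈ Et, a ∉ e := fun e he => (hEt e he).2
  have hdisj_a : Disjoint {({a} : Finset ι)} Et :=
    Finset.disjoint_singleton_left.mpr fun h => haEt _ h (Finset.mem_singleton_self a)
  have hdisj_E : Disjoint E ({({a} : Finset ι)} ∪ Et) :=
    Finset.disjoint_union_right.mpr ⟨Finset.disjoint_singleton_right.mpr haE,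
      (Finset.disjoint_iff_inter_eq_empty.mpr hdisj).symm⟩
  have hprod_image : ∀ g : Finset ι → ℂ,
      ∏ ea ∈ (E.filter (fun e => a ∈ e)).image (fun e => e.erase a), g ea =
        ∏ e ∈ E.filter (fun e => a ∈ e), g (e.erase a) := fun g =>
    Finset.prod_image fun e₁ h₁ e₂ h₂ =>
      Finset.erase_injOn' a (Finset.mem_filter.mp h₁).2 (Finset.mem_filter.mp h₂).2
  funext x
  have hs₀ : csign {a} (Function.update x a false) = 1 :=
    csign_update_false_of_mem a x (Finset.mem_singleton_self a)
  have hs₁ : csign {a} (Function.update x a true) = -1 := by simp [csign]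
  rw [Finset.union_assoc]
  simp only [Hgate, Pi.add_apply, hgState_union hdisj_E, Finset.prod_union hdisj_a,
    Finset.prod_singleton]
  simp only [hgState, Pi.smul_apply, smul_eq_mul,
    prod_csign_update_false, prod_csign_update_true, prod_csign_update_of_forall_notMem a x haEt,
    hs₀, hs₁, hprod_image, plusAll]
  simp only [Finset.insert_eq]
  rw [← inv_sqrt_two_mul_two]
  rcases prod_csign_eq_one_or_neg_one Et x with hT | hT
  · rw [hT, Finset.prod_congr rfl fun e _ => prod_csign_union_of_prod_eq_one _ hT,
      Finset.prod_const_one, prod_csign_union_of_prod_eq_one _ hT]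
    ring
  · rw [hT, Finset.prod_congr rfl fun e _ => prod_csign_union_of_prod_eq_neg_one _ hT,
      prod_csign_union_of_prod_eq_neg_one _ hT, csign_singleton]
    ring

/-- Theorem 3, plus outcome.  Let `a ∈ V`, `E` a finite set of
nonempty hyperedges with `{a} ∉ E`, and `Ẽ` a finite set of nonempty hyperedges
avoiding `a` with `Ẽ ∩ E = ∅`.  With `H_α = (V,E)` and `H_β = (V, E ∪ {{a}} ∪ Ẽ)`,
`E′ = {e ∈ E : a ∉ e}` and `A^α(a) = {e∖{a} : e ∈ E, a ∈ e}`, one has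
`H_a(|H_α⟩ + |H_β⟩) = √2 · ∏_{e′∈E′} C_{e′} · ∏_{e_a∈A^α(a)} ∏_{ẽ∈Ẽ} C_{e_a∪ẽ}
  · ∏_{ẽ∈Ẽ} C_{ẽ∪{a}} |+⟩^{⊗|V|}`. -/
theorem hypergraph_X_rule_plus {ι : Type} [Fintype ι] [DecidableEq ι] (a : ι)
    (E Et : Finset (Finset ι))
    (hE : ∀ e ∈ E, e.Nonempty) (haE : ({a} : Finset ι) ∉ E)
    (hEt : ∀ e ∈ Et, e.Nonempty ∧ a ∉ e) (hdisj : Et ∩ E = ∅) :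
    Hgate a (hgState E + hgState (E ∪ {({a} : Finset ι)} ∪ Et)) =
      (Real.sqrt 2 : ℂ) • (fun x =>
        (∏ e ∈ E.filter (fun e => a ∉ e), csign e x) *
        ((∏ ea ∈ (E.filter (fun e => a ∈ e)).image (fun e => e.erase a),
            ∏ et ∈ Et, csign (ea ∪ et) x) *
        ((∏ et ∈ Et, csign (insert a et) x) * plusAll ι x))) :=
  hypergraph_X_rule_plus_general a E Et haE hEt hdisj
end
end

section
/- Let V be a finite set of qubits, a ∈ V, E a finite set of nonempty subsets of V with {a} ∉ E, and Ẽ a finite set of nonempty subsets of V∖{a} with Ẽ ∩ E = ∅. Let H_α = (V, E) and H_β = (V, E ∪ {{a}} ∪ Ẽ). Set E′ = {e ∈ E : a ∉ e} and A^α(a) = {e∖{a} : e ∈ E, a ∈ e}. Then H_a(|H_α⟩ − |H_β⟩) = √2 · Z_a · ∏_{e′∈E′} C_{e′} · ∏_{e_a∈A^α(a)} ( C_{e_a} ∏_{ẽ∈Ẽ} C_{e_a∪ẽ} ) · ∏_{ẽ∈Ẽ} C_{ẽ∪{a}} |+⟩^{⊗|V|}; in particular the equally weighted minus superposition of |H_α⟩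 and |H_β⟩ is, up to the Hadamard gate on qubit a and normalization, again a hypergraph state. -/
noncomputable section

private lemma csign_pm' {ι : Type} (e : Finset ι) (x : ι → Bool) :
    csign e x = 1 ∨ csign e x = -1 := by
  unfold csign; split <;> simp

private lemma prod_csign_pm' {ι : Type} (S : Finset (Finset ι)) (x : ι → Bool) :
    (∏ e ∈ S, csign e x) = 1 ∨ (∏ e ∈ S, csign e x) = -1 := by
  classical
  induction S using Finset.induction with
  | empty => simp
  | @insert e S he ih =>
    rw [Finset.prod_insert he]
    rcases csign_pm' e x with h1 | h1 <;> rcases ih with h2 | h2 <;> simp [h1, h2]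

private lemma csign_update_false' {ι : Type} [DecidableEq ι] (a : ι) (e : Finset ι)
    (x : ι → Bool) :
    csign e (Function.update x a false) = if a ∈ e then 1 else csign e x := by
  unfold csign
  by_cases ha : a ∈ e
  · simp only [ha, if_true]
    rw [if_neg]
    intro h
    have := h a ha
    simp at this
  · simp only [ha, if_false]
    congr 1
    simp only [eq_iff_iff]
    have hup : ∀ i ∈ e, Function.update x a false i = x i := by
      intro i hi
      have hia : i ≠ a := by rintro rfl; exact ha hi
      exact Function.update_of_ne hia _ _
    constructor
    · intro h i hi
      rw [← hup i hi]
      exact h i hi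
    · intro h i hi
      rw [hup i hi]
      exact h i hi

private lemma csign_update_true' {ι : Type} [DecidableEq ι] (a : ι) (e : Finset ι)
    (x : ι → Bool) :
    csign e (Function.update x a true) = csign (e.erase a) x := by
  unfold csign
  congr 1
  simp only [eq_iff_iff]
  constructor
  · intro h i hi
    have := h i (Finset.mem_of_mem_erase hi)
    rwa [Function.update_of_ne (Finset.ne_of_mem_erase hi)] at this
  · intro h i hi
    by_cases hia : i = a
    · subst hia
      rw [Function.update_self]
    · rw [Function.update_of_ne hia]
      exact h i (Finset.mem_erase.mpr ⟨hia, hi⟩)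

private lemma csign_insert' {ι : Type} [DecidableEq ι] (a : ι) (e : Finset ι) (x : ι → Bool) :
    csign (insert a e) x = if x a = true then csign e x else 1 := by
  unfold csign
  by_cases hxa : x a = true
  · simp [Finset.forall_mem_insert, hxa]
  · rw [if_neg hxa, if_neg]
    exact fun h => hxa (h a (Finset.mem_insert_self a e))

private lemma csign_union' {ι : Type} [DecidableEq ι] (f e : Finset ι) (x : ι → Bool) :
    csign (f ∪ e) x = if ∀ i ∈ f, x i = true then csign e x else 1 := by
  unfold csign
  by_cases hf : ∀ i ∈ f, x i = true
  · rw [if_pos hf]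
    congr 1
    simp only [eq_iff_iff]
    constructor
    · intro h i hi; exact h i (Finset.mem_union_right f hi)
    · intro h i hi
      rcases Finset.mem_union.mp hi with h1 | h1
      · exact hf i h1
      · exact h i h1
  · rw [if_neg hf, if_neg]
    intro h
    exact hf fun i hi => h i (Finset.mem_union_left e hi)

private lemma prod_csign_union' {ι : Type} [DecidableEq ι] (f : Finset ι)
    (Et : Finset (Finset ι)) (x : ι → Bool) :
    (∏ et ∈ Et, csign (f ∪ et) x)
      = if ∀ i ∈ f, x i = true then ∏ et ∈ Et, csign et x else 1 := by
  by_cases hf : ∀ i ∈ f, x i = true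
  · rw [if_pos hf]
    exact Finset.prod_congr rfl fun et _ => by rw [csign_union', if_pos hf]
  · rw [if_neg hf]
    exact Finset.prod_eq_one fun et _ => by rw [csign_union', if_neg hf]

/-- Theorem 3, minus outcome.  In the setting of the
hypergraph-state Pauli-X rule,
`H_a(|H_α⟩ − |H_β⟩) = √2 · Z_a · ∏_{e′∈E′} C_{e′}
  · ∏_{e_a∈A^α(a)} ( C_{e_a} ∏_{ẽ∈Ẽ} C_{e_a∪ẽ} ) · ∏_{ẽ∈Ẽ} C_{ẽ∪{a}} |+⟩^{⊗|V|}`. -/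
theorem hypergraph_X_rule_minus {ι : Type} [Fintype ι] [DecidableEq ι] (a : ι)
    (E Et : Finset (Finset ι))
    (hE : ∀ e ∈ E, e.Nonempty) (haE : ({a} : Finset ι) ∉ E)
    (hEt : ∀ e ∈ Et, e.Nonempty ∧ a ∉ e) (hdisj : Et ∩ E = ∅) :
    Hgate a (hgState E - hgState (E ∪ {({a} : Finset ι)} ∪ Et)) =
      (Real.sqrt 2 : ℂ) • (fun x =>
        csign ({a} : Finset ι) x *
        ((∏ e ∈ E.filter (fun e => a ∉ e), csign e x) *
        ((∏ ea ∈ (E.filter (fun e => a ∈ e)).image (fun e => e.erase a),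
            (csign ea x * ∏ et ∈ Et, csign (ea ∪ et) x)) *
        ((∏ et ∈ Et, csign (insert a et) x) * plusAll ι x)))) := by
  funext x
  simp only [Hgate, Pi.sub_apply, hgState, plusAll, Pi.smul_apply, smul_eq_mul]
  set c : ℂ := (((Real.sqrt 2)⁻¹ : ℝ) : ℂ) with hc
  set s : ℂ := (if x a = true then (-1 : ℂ) else 1) with hs
  set T : ℂ := ∏ et ∈ Et, csign et x with hT
  set P' : ℂ := ∏ e ∈ E.filter (fun e => a ∉ e), csign e x with hP
  set R : ℂ := ∏ e ∈ E.filter (fun e => a ∈ e), csign (e.erase a) x with hR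
  have hcc : (Real.sqrt 2 : ℂ) = 2 * c := by
    have hccR : Real.sqrt 2 = 2 * (Real.sqrt 2)⁻¹ := by
      have hne : Real.sqrt 2 ≠ 0 := by positivity
      have h2s : Real.sqrt 2 * Real.sqrt 2 = 2 := Real.mul_self_sqrt (by norm_num)
      field_simp
      all_goals linarith [h2s]
    rw [hc]
    exact_mod_cast hccR
  have haEt : ({a} : Finset ι) ∉ Et := fun h => (hEt _ h).2 (Finset.mem_singleton_self a)
  have dE : Disjoint E ({({a} : Finset ι)} : Finset (Finset ι)) :=
    Finset.disjoint_singleton_right.mpr haE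
  have dEt : Disjoint (E ∪ {({a} : Finset ι)}) Et := by
    rw [Finset.disjoint_union_left]
    exact ⟨(Finset.disjoint_iff_inter_eq_empty.mpr hdisj).symm,
      Finset.disjoint_singleton_left.mpr haEt⟩
  have hprodU : ∀ y : ι → Bool, (∏ e ∈ E ∪ {({a} : Finset ι)} ∪ Et, csign e y)
      = (∏ e ∈ E, csign e y) * csign ({a} : Finset ι) y * ∏ e ∈ Et, csign e y := by
    intro y
    rw [Finset.prod_union dEt, Finset.prod_union dE, Finset.prod_singleton]
  have h1 : (∏ e ∈ E, csign e (Function.update x a false)) = P' := by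
    rw [Finset.prod_congr rfl (fun e _ => csign_update_false' a e x),
      Finset.prod_ite, Finset.prod_const_one, one_mul]
  have h2 : (∏ e ∈ E, csign e (Function.update x a true)) = R * P' := by
    rw [Finset.prod_congr rfl (fun e _ => csign_update_true' a e x),
      ← Finset.prod_filter_mul_prod_filter_not E (fun e => a ∈ e)
        (fun e => csign (e.erase a) x)]
    congr 1
    apply Finset.prod_congr rfl
    intro e he
    rw [Finset.erase_eq_of_notMem (Finset.mem_filter.mp he).2]
  have hEt0 : (∏ e ∈ Et, csign e (Function.update x a false)) = T := by
    apply Finset.prod_congr rfl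
    intro e he
    rw [csign_update_false', if_neg (hEt e he).2]
  have hEt1 : (∏ e ∈ Et, csign e (Function.update x a true)) = T := by
    apply Finset.prod_congr rfl
    intro e he
    rw [csign_update_true', Finset.erase_eq_of_notMem (hEt e he).2]
  have ha0 : csign ({a} : Finset ι) (Function.update x a false) = 1 := by
    rw [csign_update_false', if_pos (Finset.mem_singleton_self a)]
  have ha1 : csign ({a} : Finset ι) (Function.update x a true) = -1 := by
    rw [csign_update_true']
    simp [csign, Finset.erase_singleton]
  have hsa : csign ({a} : Finset ι) x = s := by
    rw [hs]
    simp [csign]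
  have hB : (∏ et ∈ Et, csign (insert a et) x) = if x a = true then T else 1 := by
    rw [Finset.prod_congr rfl (fun e _ => csign_insert' a e x), hT]
    by_cases hxa : x a = true
    · rw [if_pos hxa]
      exact Finset.prod_congr rfl fun e _ => if_pos hxa
    · rw [if_neg hxa]
      exact Finset.prod_eq_one fun e _ => if_neg hxa
  have hinj : ∀ e1 ∈ E.filter (fun e => a ∈ e), ∀ e2 ∈ E.filter (fun e => a ∈ e),
      e1.erase a = e2.erase a → e1 = e2 := by
    intro e1 h1' e2 h2' h
    have m1 := (Finset.mem_filter.mp h1').2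
    have m2 := (Finset.mem_filter.mp h2').2
    rw [← Finset.insert_erase m1, ← Finset.insert_erase m2, h]
  have hAgen : (∏ ea ∈ (E.filter (fun e => a ∈ e)).image (fun e => e.erase a),
        (csign ea x * ∏ et ∈ Et, csign (ea ∪ et) x))
      = ∏ e ∈ E.filter (fun e => a ∈ e),
          (csign (e.erase a) x * (if ∀ i ∈ e.erase a, x i = true then T else 1)) := by
    rw [Finset.prod_image hinj]
    refine Finset.prod_congr rfl fun e _ => ?_
    rw [prod_csign_union', ← hT]
    by_cases hu : ∀ i ∈ e.erase a, x i = true <;> simp [hu]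
  rw [hprodU (Function.update x a false), hprodU (Function.update x a true),
    h1, h2, hEt0, hEt1, ha0, ha1, hsa, hB, hAgen, hcc]
  rcases prod_csign_pm' Et x with hT1 | hT1 <;> rw [← hT] at hT1
  · have hA : (∏ e ∈ E.filter (fun e => a ∈ e),
        (csign (e.erase a) x * (if ∀ i ∈ e.erase a, x i = true then T else 1))) = R := by
      rw [hR]
      refine Finset.prod_congr rfl fun e _ => ?_
      rw [hT1, ite_self, mul_one]
    rw [hA, hT1, ite_self]
    ring
  · have hA : (∏ e ∈ E.filter (fun e => a ∈ e),
        (csign (e.erase a) x * (if ∀ i ∈ e.erase a, x i = true then T else 1))) = 1 := by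
      refine Finset.prod_eq_one fun e _ => ?_
      rw [hT1]
      by_cases hu : ∀ i ∈ e.erase a, x i = true
      · rw [if_pos hu]
        have hcs : csign (e.erase a) x = -1 := by unfold csign; rw [if_pos hu]
        rw [hcs]
        norm_num
      · rw [if_neg hu]
        have hcs : csign (e.erase a) x = 1 := by unfold csign; rw [if_neg hu]
        rw [hcs, mul_one]
    have hss : s * s = 1 := by
      rw [hs]
      by_cases hxa : x a = true <;> simp [hxa]
    rw [hA, hT1, ← hs]
    linear_combination (-2 * c * c ^ Fintype.card ι * P') * hss
end
end

section
/- The five-qubit three-uniform hypergraph state |H₅⟩ = C_{{1,2,4}}C_{{1,2,5}}C_{{1,3,4}}C_{{1,3,5}}C_{{2,3,4}}C_{{2,3,5}}|+⟩^{⊗5} satisfies the exact expansion |H₅⟩ = (1/(2√2)) [ (|000⟩+|001⟩+|010⟩+|100⟩)_{123} ⊗ |+⟩_4|+⟩_5 + (|011⟩+|110⟩+|101⟩+|111⟩)_{123} ⊗ |−⟩_4|−⟩_5 ]. -/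
noncomputable section

/-- The five-qubit three-uniform hypergraph state `|H₅⟩`, on qubits
`1,2,3 = Sum.inl 0,1,2` and `4,5 = Sum.inr 0,1`, with hyperedges
`{1,2,4},{1,2,5},{1,3,4},{1,3,5},{2,3,4},{2,3,5}`. -/
def H5 : QState (Fin 3 ⊕ Fin 2) :=
  Cgate {Sum.inl 0, Sum.inl 1, Sum.inr 0} (Cgate {Sum.inl 0, Sum.inl 1, Sum.inr 1}
    (Cgate {Sum.inl 0, Sum.inl 2, Sum.inr 0} (Cgate {Sum.inl 0, Sum.inl 2, Sum.inr 1}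
      (Cgate {Sum.inl 1, Sum.inl 2, Sum.inr 0} (Cgate {Sum.inl 1, Sum.inl 2, Sum.inr 1}
        (plusAll (Fin 3 ⊕ Fin 2)))))))

/-! The six hyperedges are `{a, b, t}` for the three pairs `a b` of the first three qubits and
`t ∈ {4, 5}`. For a fixed target `t` the three signs multiply to `(−1)^{x_t · e₂(x₁, x₂, x₃)}`,
and the second elementary symmetric polynomial `e₂` is odd exactly when at least two of
`x₁, x₂, x₃` are set. So `|H₅⟩` is `|+⟩|+⟩` on qubits 4, 5 over the basis states of weight at most
one of qubits 1, 2, 3, and `|−⟩|−⟩` over those of weight at least two. -/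

def majority3 (a b c : Bool) : Bool := a && b || a && c || b && c

def boolSign (b : Bool) : ℂ := if b then -1 else 1

theorem csign_mul_csign_mul_csign {ι : Type} [DecidableEq ι] (a b c t : ι) (x : ι → Bool) :
    csign {a, b, t} x * csign {a, c, t} x * csign {b, c, t} x
      = boolSign (x t && majority3 (x a) (x b) (x c)) := by
  simp only [csign, boolSign, majority3, Finset.forall_mem_insert, Finset.mem_singleton, forall_eq]
  cases x a <;> cases x b <;> cases x c <;> cases x t <;> norm_num

theorem H5_apply (x : Fin 3 ⊕ Fin 2 → Bool) :
    H5 x = (((Real.sqrt 2)⁻¹ : ℝ) : ℂ) ^ 5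
      * boolSign (x (.inr 0) && majority3 (x (.inl 0)) (x (.inl 1)) (x (.inl 2)))
      * boolSign (x (.inr 1) && majority3 (x (.inl 0)) (x (.inl 1)) (x (.inl 2))) := by
  rw [← csign_mul_csign_mul_csign, ← csign_mul_csign_mul_csign]
  simp only [H5, Cgate, plusAll, Fintype.card_sum, Fintype.card_fin]
  ring

theorem zketS_fin3_apply (a b c : Bool) (y : Fin 3 → Bool) :
    zketS ![a, b, c] y = if y 0 = a ∧ y 1 = b ∧ y 2 = c then 1 else 0 := by
  simp [zketS, funext_iff, Fin.forall_fin_succ]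

theorem sum_zketS_weight_le_one (y : Fin 3 → Bool) :
    (zketS ![false, false, false] + zketS ![false, false, true]
      + zketS ![false, true, false] + zketS ![true, false, false]) y
      = if majority3 (y 0) (y 1) (y 2) then 0 else 1 := by
  simp only [Pi.add_apply, zketS_fin3_apply, majority3]
  cases y 0 <;> cases y 1 <;> cases y 2 <;> norm_num

theorem sum_zketS_weight_ge_two (y : Fin 3 → Bool) :
    (zketS ![false, true, true] + zketS ![true, true, false]
      + zketS ![true, false, true] + zketS ![true, true, true]) y
      = if majority3 (y 0) (y 1) (y 2) then 1 else 0 := by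
  simp only [Pi.add_apply, zketS_fin3_apply, majority3]
  cases y 0 <;> cases y 1 <;> cases y 2 <;> norm_num

theorem xketS_apply {ι : Type} [Fintype ι] (s x : ι → Bool) :
    xketS s x = (((Real.sqrt 2)⁻¹ : ℝ) : ℂ) ^ Fintype.card ι * ∏ i, boolSign (s i && x i) := by
  simp only [xketS, boolSign, Finset.prod_mul_distrib, Finset.prod_const, Finset.card_univ]

theorem inv_two_mul_sqrt_two : ((2 * Real.sqrt 2)⁻¹ : ℝ) = (Real.sqrt 2)⁻¹ ^ 3 := by
  rw [inv_pow, pow_succ, sq, Real.mul_self_sqrt zero_le_two]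

/-- `|H₅⟩ = (1/(2√2)) [ (|000⟩+|001⟩+|010⟩+|100⟩)_{123} ⊗ |+⟩₄|+⟩₅
  + (|011⟩+|110⟩+|101⟩+|111⟩)_{123} ⊗ |−⟩₄|−⟩₅ ]`. -/
theorem H5_expansion :
    H5 = (((2 * Real.sqrt 2)⁻¹ : ℝ) : ℂ) • (
      tensP (zketS ![false, false, false] + zketS ![false, false, true]
          + zketS ![false, true, false] + zketS ![true, false, false])
        (xketS (![false, false] : Fin 2 → Bool))
      + tensP (zketS ![false, true, true] + zketS ![true, true, false]
          + zketS ![true, false, true] + zketS ![true, true, true])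
        (xketS (![true, true] : Fin 2 → Bool))) := by
  funext x
  rw [H5_apply, Pi.smul_apply, Pi.add_apply, tensP, tensP, sum_zketS_weight_le_one,
    sum_zketS_weight_ge_two, xketS_apply, xketS_apply, inv_two_mul_sqrt_two]
  simp only [Fin.prod_univ_two, Fintype.card_fin, Matrix.cons_val_zero, Matrix.cons_val_one,
    smul_eq_mul]
  cases majority3 (x (.inl 0)) (x (.inl 1)) (x (.inl 2)) <;> cases x (.inr 0) <;>
    cases x (.inr 1) <;> simp [boolSign] <;> ring
end
end

section
/- On nine qubits labeled 1,…,9, for every state |ψ⟩ of qubits 4,…,9 the following circuit identity holds (operators act right to left): C_{{3,8,9}} H_3 C_{{2,6,7}} H_2 C_{{1,4,5}} H_1 C_{{1,2,3}} H_1 C_{{1,4,5}} H_2 C_{{2,6,7}} H_3 C_{{3,8,9}} ( |+⟩_1 ⊗ |+⟩_2 ⊗ |+⟩_3 ⊗ |ψ⟩ ) = |+⟩_1 ⊗ |+⟩_2 ⊗ |+⟩_3 ⊗ C_{{4,5,6,7,8,9}} |ψ⟩. In particular this circuit, built from one CCZ on the ancillas, six CCZ gates coupling one ancilla to two targets, and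 six Hadamard gates on the three ancillas 1,2,3 prepared in |+⟩, implements the six-qubit generalized controlled-Z gate C⁶Z on qubits 4,…,9. -/
noncomputable section

/-! The circuit factors as `U⁻¹ ∘ C_{123} ∘ U` with `U = H₁ C₁₄₅ H₂ C₂₆₇ H₃ C₃₈₉`, since every gate is
an involution. Each `H_a C_{a,s,t}` acts on an ancilla `a` in `|+⟩` by phase kickback and leaves it in
the basis state `|y_s y_t⟩`, so `U` sends `|+++⟩ ⊗ |y⟩` to `|y₄y₅, y₆y₇, y₈y₉⟩ ⊗ |y⟩`. There `C_{123}`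
contributes exactly the sign `(−1)^{y₄⋯y₉}` of `C_{456789}`, and `U⁻¹` restores `|+++⟩`. -/

open Function

lemma invSqrtTwo_sq : ((((Real.sqrt 2)⁻¹ : ℝ) : ℂ)) ^ 2 = 2⁻¹ := by
  rw [← Complex.ofReal_pow, inv_pow, Real.sq_sqrt zero_le_two]; push_cast; rfl

lemma invSqrtTwo_mul_two : (((Real.sqrt 2)⁻¹ : ℝ) : ℂ) * 2 = Real.sqrt 2 := by
  have h : (Real.sqrt 2)⁻¹ * 2 = Real.sqrt 2 := by
    rw [inv_mul_eq_div, div_eq_iff (by positivity), Real.mul_self_sqrt zero_le_two]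
  exact_mod_cast congrArg ((↑) : ℝ → ℂ) h

lemma sqrtTwo_mul_invSqrtTwo : ((Real.sqrt 2 : ℝ) : ℂ) * (((Real.sqrt 2)⁻¹ : ℝ) : ℂ) = 1 := by
  rw [← Complex.ofReal_mul, mul_inv_cancel₀ (by positivity), Complex.ofReal_one]

lemma Hgate_Hgate {ι : Type} [DecidableEq ι] (i : ι) (ψ : QState ι) :
    Hgate i (Hgate i ψ) = ψ := by
  funext x
  conv_rhs => rw [← update_eq_self i x]
  simp only [Hgate, update_idem, update_self]
  cases x i <;> simp only [Bool.false_eq_true, if_true, if_false]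
  · linear_combination 2 * ψ (update x i false) * invSqrtTwo_sq
  · linear_combination 2 * ψ (update x i true) * invSqrtTwo_sq

lemma Cgate_Cgate {ι : Type} (e : Finset ι) (ψ : QState ι) : Cgate e (Cgate e ψ) = ψ := by
  funext x
  simp only [Cgate, csign]
  split_ifs <;> ring

/-- Phase kickback: `hφ` says that `φ` is `|+⟩` on qubit `i`, up to normalisation. -/
lemma Hgate_Cgate_insert {ι : Type} [DecidableEq ι] {i : ι} {f : Finset ι} (hi : i ∉ f)
    {φ : QState ι} (hφ : ∀ x b, φ (update x i b) = φ x) :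
    Hgate i (Cgate (insert i f) φ) =
      fun x => (Real.sqrt 2 : ℂ) * if x i = decide (∀ j ∈ f, x j = true) then φ x else 0 := by
  funext x
  have hf : ∀ b, (∀ j ∈ f, update x i b j = true) ↔ ∀ j ∈ f, x j = true :=
    fun b => forall₂_congr fun j hj => by rw [update_of_ne (ne_of_mem_of_not_mem hj hi)]
  simp only [Hgate, Cgate, csign, Finset.forall_mem_insert, update_self, hf, hφ]
  by_cases hp : ∀ j ∈ f, x j = true
  · cases x i <;> simp only [eq_true hp, if_true, decide_true, Bool.false_eq_true,
      if_false, true_and, false_and]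
    · ring
    · linear_combination φ x * invSqrtTwo_mul_two
  · cases x i <;> simp only [eq_false hp, if_true, decide_false, Bool.false_eq_true,
      Bool.true_eq_false, if_false, and_false]
    · linear_combination φ x * invSqrtTwo_mul_two
    · ring

open Sum

def computeAnds (w : QState (Fin 3 ⊕ Fin 6)) : QState (Fin 3 ⊕ Fin 6) :=
  Hgate (inl 0) (Cgate {inl 0, inr 0, inr 1}
    (Hgate (inl 1) (Cgate {inl 1, inr 2, inr 3}
      (Hgate (inl 2) (Cgate {inl 2, inr 4, inr 5} w)))))

def uncomputeAnds (w : QState (Fin 3 ⊕ Fin 6)) : QState (Fin 3 ⊕ Fin 6) :=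
  Cgate {inl 2, inr 4, inr 5} (Hgate (inl 2)
    (Cgate {inl 1, inr 2, inr 3} (Hgate (inl 1)
      (Cgate {inl 0, inr 0, inr 1} (Hgate (inl 0) w)))))

lemma uncomputeAnds_computeAnds (w : QState (Fin 3 ⊕ Fin 6)) :
    uncomputeAnds (computeAnds w) = w := by
  simp only [computeAnds, uncomputeAnds, Hgate_Hgate, Cgate_Cgate]

lemma computeAnds_tensP_plusAll (ψ : QState (Fin 6)) :
    computeAnds (tensP (plusAll (Fin 3)) ψ) = fun x =>
      if x (inl 0) = (x (inr 0) && x (inr 1)) ∧ x (inl 1) = (x (inr 2) && x (inr 3)) ∧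
          x (inl 2) = (x (inr 4) && x (inr 5))
        then ψ (fun j => x (inr j)) else 0 := by
  unfold computeAnds
  rw [Hgate_Cgate_insert (i := inl 2), Hgate_Cgate_insert (i := inl 1),
    Hgate_Cgate_insert (i := inl 0)]
  · funext x
    simp only [tensP, plusAll, Fintype.card_fin, Finset.mem_insert, Finset.mem_singleton,
      forall_eq_or_imp, forall_eq, Bool.decide_and, Bool.decide_eq_true, mul_ite, mul_zero,
      ← ite_and]
    have h : ((Real.sqrt 2 : ℝ) : ℂ) ^ 3 * (((Real.sqrt 2)⁻¹ : ℝ) : ℂ) ^ 3 = 1 := by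
      rw [← mul_pow, sqrtTwo_mul_invSqrtTwo, one_pow]
    congr 1
    linear_combination (ψ fun j => x (inr j)) * h
  all_goals simp [tensP, plusAll, update_apply]

lemma Cgate_computeAnds_tensP_plusAll (ψ : QState (Fin 6)) :
    Cgate {inl 0, inl 1, inl 2} (computeAnds (tensP (plusAll (Fin 3)) ψ)) =
      computeAnds (tensP (plusAll (Fin 3)) (Cgate {0, 1, 2, 3, 4, 5} ψ)) := by
  rw [computeAnds_tensP_plusAll, computeAnds_tensP_plusAll]
  funext x
  simp only [Cgate]
  split_ifs with h
  · obtain ⟨h0, h1, h2⟩ := h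
    simp only [csign, Finset.mem_insert, Finset.mem_singleton, forall_eq_or_imp, forall_eq, h0, h1,
      h2, Bool.and_eq_true, and_assoc]
  · rw [mul_zero]

/-- The circuit identity implementing the six-qubit
generalized controlled-Z gate `C⁶Z`:  on nine qubits with ancillas
`1,2,3 = Sum.inl 0,1,2` prepared in `|+⟩` and targets
`4,…,9 = Sum.inr 0,…,5`, for every state `ψ` of the targets,
`C_{389} H₃ C_{267} H₂ C_{145} H₁ C_{123} H₁ C_{145} H₂ C_{267} H₃ C_{389}
  (|+⟩₁⊗|+⟩₂⊗|+⟩₃⊗|ψ⟩) = |+⟩₁⊗|+⟩₂⊗|+⟩₃⊗ C_{456789}|ψ⟩`. -/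
theorem C6Z_circuit_identity (ψ : QState (Fin 6)) :
    Cgate ({Sum.inl 2, Sum.inr 4, Sum.inr 5} : Finset (Fin 3 ⊕ Fin 6))
      (Hgate (Sum.inl 2 : Fin 3 ⊕ Fin 6)
        (Cgate {Sum.inl 1, Sum.inr 2, Sum.inr 3}
          (Hgate (Sum.inl 1)
            (Cgate {Sum.inl 0, Sum.inr 0, Sum.inr 1}
              (Hgate (Sum.inl 0)
                (Cgate {Sum.inl 0, Sum.inl 1, Sum.inl 2}
                  (Hgate (Sum.inl 0)
                    (Cgate {Sum.inl 0, Sum.inr 0, Sum.inr 1}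
                      (Hgate (Sum.inl 1)
                        (Cgate {Sum.inl 1, Sum.inr 2, Sum.inr 3}
                          (Hgate (Sum.inl 2)
                            (Cgate {Sum.inl 2, Sum.inr 4, Sum.inr 5}
                              (tensP (plusAll (Fin 3)) ψ))))))))))))) =
      tensP (plusAll (Fin 3))
        (Cgate ({0, 1, 2, 3, 4, 5} : Finset (Fin 6)) ψ) := by
  change uncomputeAnds (Cgate _ (computeAnds (tensP (plusAll (Fin 3)) ψ))) = _
  rw [Cgate_computeAnds_tensP_plusAll, uncomputeAnds_computeAnds]
end
end

section
/- Let a₁,…,a_m be m ≥ 1 distinct qubit labels (ancillas) and let S₁,…,S_m be pairwise disjoint nonempty finite sets of qubit labels, each disjoint from {a₁,…,a_m}. Then for every state |ψ⟩ of the non-ancilla qubits, ( ∏_{j=1}^m C_{{a_j}∪S_j} ) ( ∏_{j=1}^m H_{a_j} ) C_{{a₁,…,a_m}} ( ∏_{j=1}^m H_{a_j} ) ( ∏_{j=1}^m C_{{a_j}∪S_j} ) ( |+⟩_{a₁} ⊗ ⋯ ⊗ |+⟩_{a_m} ⊗ |ψ⟩ ) = |+⟩_{a₁} ⊗ ⋯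 ⊗ |+⟩_{a_m} ⊗ C_{S₁∪⋯∪S_m} |ψ⟩. In particular, with each S_j a pair of target qubits, an m-qubit generalized controlled-Z gate on the ancillas together with 2m CCZ gates and 2m Hadamard gates implements a 2m-qubit generalized controlled-Z gate on the targets; iterating this recursion yields the C^NZ gate of Theorem 2 with a logarithmic number of Hadamard layers. -/
noncomputable section

/-!
Fix the target bits `y` and put `t_j = ∏_{i∈S_j} y_i`. The phase layer `∏_j C_{{a_j}∪S_j}` multiplies
`|+⟩^{⊗m}` by `(-1)^{a·t}`, i.e. turns it into `H^{⊗m}|t⟩`. Hence after the first Hadamard layer the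
ancillas hold `|t⟩`, and `C_{{a₁,…,a_m}}` kicks back the phase `(-1)^{∏_j t_j}`, which is
`C_{S₁∪⋯∪S_m}` on the targets. The last two layers then undo the first two, because both the
Hadamard layer and the phase layer are involutions.
-/

open Finset

local notation "invSqrt2" => (((Real.sqrt 2)⁻¹ : ℝ) : ℂ)

def hadamardSign (a b : Bool) : ℂ := if a && b then -1 else 1

def bitProd {ι : Type} (e : Finset ι) (y : ι → Bool) : Bool := decide (∀ i ∈ e, y i = true)

lemma hadamardSign_mul_self (a b : Bool) : hadamardSign a b * hadamardSign a b = 1 := by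
  cases a <;> cases b <;> norm_num [hadamardSign]

lemma sum_hadamardSign_mul_hadamardSign (a c : Bool) :
    ∑ b, hadamardSign a b * hadamardSign b c = if a = c then 2 else 0 := by
  cases a <;> cases c <;> norm_num [hadamardSign]

lemma sum_prod_hadamardSign_mul_hadamardSign {κ : Type} [Fintype κ] [DecidableEq κ]
    (a c : κ → Bool) :
    ∑ b : κ → Bool, ∏ k, hadamardSign (a k) (b k) * hadamardSign (b k) (c k) =
      if a = c then 2 ^ Fintype.card κ else 0 := by
  rw [← Fintype.prod_sum (fun k b => hadamardSign (a k) b * hadamardSign b (c k))]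
  simp only [sum_hadamardSign_mul_hadamardSign, prod_ite_zero, prod_const, card_univ,
    mem_univ, forall_const, funext_iff]

lemma invSqrt2_pow_mul_self_mul_two_pow (n : ℕ) : invSqrt2 ^ n * invSqrt2 ^ n * 2 ^ n = 1 := by
  rw [← mul_pow, ← mul_pow, ← Complex.ofReal_mul, ← mul_inv, Real.mul_self_sqrt zero_le_two]
  norm_num

section Gates

variable {α β : Type}

lemma csign_eq_ite_bitProd (e : Finset α) (z : α → Bool) :
    csign e z = if bitProd e z then -1 else 1 := by
  simp [csign, bitProd]

lemma csign_insert [DecidableEq α] (i : α) (e : Finset α) (z : α → Bool) :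
    csign (insert i e) z = hadamardSign (z i) (bitProd e z) := by
  simp [csign, hadamardSign, bitProd]

lemma bitProd_map (s : Finset α) (f : α ↪ β) (z : β → Bool) :
    bitProd (s.map f) z = bitProd s (z ∘ f) := by
  simp [bitProd]

lemma csign_map (s : Finset α) (f : α ↪ β) (z : β → Bool) :
    csign (s.map f) z = csign s (z ∘ f) := by
  simp [csign_eq_ite_bitProd, bitProd_map]

lemma csign_biUnion [DecidableEq β] (s : Finset α) (S : α → Finset β) (y : β → Bool) :
    csign (s.biUnion S) y = csign s fun j => bitProd (S j) y := by
  simp only [csign, bitProd, mem_biUnion, decide_eq_true_eq]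
  grind

lemma Hgate_apply_eq_sum [DecidableEq α] (i : α) (ψ : QState α) (x : α → Bool) :
    Hgate i ψ x = invSqrt2 * ∑ b, hadamardSign (x i) b * ψ (Function.update x i b) := by
  unfold Hgate
  cases x i <;> simp [hadamardSign] <;> ring

lemma seqComp_cons (f : α → α) (fs : List (α → α)) (a : α) :
    seqComp (f :: fs) a = f (seqComp fs a) := rfl

end Gates

section FiberKet

variable {κ ι : Type} [Fintype κ]

/-- The state `∑_y ψ(y) |t(y)⟩ ⊗ |y⟩`: the ancillas `κ` hold the bit string `t(y)` computed from
the targets `y`. -/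
def fiberKet (t : (ι → Bool) → κ → Bool) (ψ : QState ι) : QState (κ ⊕ ι) :=
  fun z => if z ∘ Sum.inl = t (z ∘ Sum.inr) then ψ (z ∘ Sum.inr) else 0

lemma fiberKet_elim (t : (ι → Bool) → κ → Bool) (ψ : QState ι) (b : κ → Bool) (y : ι → Bool) :
    fiberKet t ψ (Sum.elim b y) = if b = t y then ψ y else 0 := rfl

lemma Cgate_fiberKet_bitProd [DecidableEq ι] (S : κ → Finset ι) (ψ : QState ι) :
    Cgate (univ.map ⟨Sum.inl, Sum.inl_injective⟩) (fiberKet (fun y j => bitProd (S j) y) ψ) =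
      fiberKet (fun y j => bitProd (S j) y) (Cgate (univ.biUnion S) ψ) := by
  funext z
  simp only [Cgate, fiberKet, csign_map, csign_biUnion]
  split_ifs with h
  · rw [← h]
    rfl
  · simp

end FiberKet

section Layers

variable {κ ι : Type} [DecidableEq κ] [DecidableEq ι]

def phaseLayer (S : κ → Finset ι) (l : List κ) : QState (κ ⊕ ι) → QState (κ ⊕ ι) :=
  seqComp (l.map fun j => Cgate (insert (Sum.inl j) ((S j).map ⟨Sum.inr, Sum.inr_injective⟩)))

lemma phaseLayer_apply (S : κ → Finset ι) (l : List κ) (ψ : QState (κ ⊕ ι)) (z : κ ⊕ ι → Bool) :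
    phaseLayer S l ψ z =
      (l.map fun j => hadamardSign (z (.inl j)) (bitProd (S j) (z ∘ Sum.inr))).prod * ψ z := by
  induction l with
  | nil => simp [phaseLayer, seqComp]
  | cons j l ih =>
    rw [phaseLayer, List.map_cons, seqComp_cons, ← phaseLayer]
    simp [Cgate, ih, csign_insert, bitProd_map, mul_assoc]

lemma phaseLayer_phaseLayer (S : κ → Finset ι) (l : List κ) (ψ : QState (κ ⊕ ι)) :
    phaseLayer S l (phaseLayer S l ψ) = ψ := by
  funext z
  rw [phaseLayer_apply, phaseLayer_apply, ← mul_assoc, ← List.prod_map_mul]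
  simp [hadamardSign_mul_self]

def hadamardLayer (l : List κ) : QState (κ ⊕ ι) → QState (κ ⊕ ι) :=
  seqComp (l.map fun j => Hgate (Sum.inl j))

variable [Fintype κ]

/-- Entry `(a_k, b_k)` of the factor on ancilla `k` of the Hadamard layer over `l`: `√2 H` if
`k ∈ l`, the identity otherwise. -/
def layerWeight (l : List κ) (a b : κ → Bool) (k : κ) : ℂ :=
  if k ∈ l then hadamardSign (a k) (b k) else if a k = b k then 1 else 0

lemma sum_hadamardSign_mul_prod_layerWeight_update {l : List κ} {j : κ} (hj : j ∉ l)
    (a b : κ → Bool) :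
    ∑ c, hadamardSign (a j) c * ∏ k, layerWeight l (Function.update a j c) b k =
      ∏ k, layerWeight (j :: l) a b k := by
  have hoff : ∀ l' : List κ, (∀ k ≠ j, k ∈ l' ↔ k ∈ l) → ∀ a' : κ → Bool,
      (∀ k ≠ j, a' k = a k) →
      ∏ k ∈ univ.erase j, layerWeight l' a' b k = ∏ k ∈ univ.erase j, layerWeight l a b k := by
    intro l' hl' a' ha'
    refine prod_congr rfl fun k hk => ?_
    have hkj := ne_of_mem_erase hk
    simp only [layerWeight, hl' k hkj, ha' k hkj]
  have hupdate : ∀ c, ∏ k ∈ univ.erase j, layerWeight l (Function.update a j c) b k =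
      ∏ k ∈ univ.erase j, layerWeight l a b k :=
    fun c => hoff l (fun _ _ => Iff.rfl) _ (fun k hk => Function.update_of_ne hk _ _)
  simp_rw [← mul_prod_erase univ _ (mem_univ j), hupdate]
  rw [hoff (j :: l) (by simp +contextual) a (fun _ _ => rfl)]
  cases b j <;> simp [layerWeight, hj, hadamardSign]

lemma hadamardLayer_apply {l : List κ} (hl : l.Nodup) (ψ : QState (κ ⊕ ι)) (x : κ ⊕ ι → Bool) :
    hadamardLayer l ψ x = invSqrt2 ^ l.length *
      ∑ b : κ → Bool, (∏ k, layerWeight l (x ∘ Sum.inl) b k) * ψ (Sum.elim b (x ∘ Sum.inr)) := by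
  induction l generalizing x with
  | nil =>
    simp [hadamardLayer, seqComp, layerWeight, prod_boole, eq_comm, ← funext_iff]
    exact congrArg ψ (Sum.elim_comp_inl_inr x).symm
  | cons j l ih =>
    obtain ⟨hj, hl⟩ := List.nodup_cons.mp hl
    have hinl : ∀ c, Function.update x (.inl j) c ∘ Sum.inl = Function.update (x ∘ Sum.inl) j c :=
      fun c => Function.update_comp_eq_of_injective x Sum.inl_injective j c
    have hinr : ∀ c, Function.update x (.inl j) c ∘ Sum.inr = x ∘ Sum.inr :=
      fun c => Function.update_comp_eq_of_forall_ne x c fun _ => Sum.inr_ne_inl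
    rw [hadamardLayer, List.map_cons, seqComp_cons, Hgate_apply_eq_sum, ← hadamardLayer]
    simp_rw [ih hl, hinl, hinr, ← sum_hadamardSign_mul_prod_layerWeight_update hj, mul_sum,
      sum_mul]
    rw [sum_comm]
    refine sum_congr rfl fun b _ => ?_
    rw [mul_sum]
    refine sum_congr rfl fun c _ => ?_
    rw [List.length_cons, pow_succ, Function.comp_apply]
    ring

lemma toFinset_eq_univ_of_forall_mem {l : List κ} (hmem : ∀ k, k ∈ l) : l.toFinset = univ :=
  eq_univ_of_forall fun k => List.mem_toFinset.2 (hmem k)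

lemma length_eq_card_of_forall_mem {l : List κ} (hl : l.Nodup) (hmem : ∀ k, k ∈ l) :
    l.length = Fintype.card κ := by
  rw [← List.toFinset_card_of_nodup hl, toFinset_eq_univ_of_forall_mem hmem, card_univ]

lemma hadamardLayer_apply_of_forall_mem {l : List κ} (hl : l.Nodup) (hmem : ∀ k, k ∈ l)
    (ψ : QState (κ ⊕ ι)) (x : κ ⊕ ι → Bool) :
    hadamardLayer l ψ x = invSqrt2 ^ Fintype.card κ *
      ∑ b : κ → Bool, (∏ k, hadamardSign (x (.inl k)) (b k)) * ψ (Sum.elim b (x ∘ Sum.inr)) := by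
  simp [hadamardLayer_apply hl, length_eq_card_of_forall_mem hl hmem, layerWeight, hmem]

lemma hadamardLayer_hadamardLayer {l : List κ} (hl : l.Nodup) (hmem : ∀ k, k ∈ l)
    (ψ : QState (κ ⊕ ι)) : hadamardLayer l (hadamardLayer l ψ) = ψ := by
  funext x
  simp_rw [hadamardLayer_apply_of_forall_mem hl hmem, Sum.elim_inl, Sum.elim_comp_inr]
  calc _ = invSqrt2 ^ Fintype.card κ * invSqrt2 ^ Fintype.card κ *
        ∑ c : κ → Bool, (∑ b : κ → Bool, ∏ k,
          hadamardSign (x (.inl k)) (b k) * hadamardSign (b k) (c k)) *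
            ψ (Sum.elim c (x ∘ Sum.inr)) := by
        simp only [mul_sum, sum_mul, prod_mul_distrib]
        rw [sum_comm]
        exact sum_congr rfl fun _ _ => sum_congr rfl fun _ _ => by ring
    _ = ψ x := by
        simp only [sum_prod_hadamardSign_mul_hadamardSign, ite_mul, zero_mul, sum_ite_eq, mem_univ,
          if_true, ← mul_assoc, invSqrt2_pow_mul_self_mul_two_pow, one_mul]
        exact congrArg ψ (Sum.elim_comp_inl_inr x)

lemma phaseLayer_tensP_plusAll {l : List κ} (hl : l.Nodup) (hmem : ∀ k, k ∈ l)
    (S : κ → Finset ι) (ψ : QState ι) :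
    phaseLayer S l (tensP (plusAll κ) ψ) =
      hadamardLayer l (fiberKet (fun y j => bitProd (S j) y) ψ) := by
  funext z
  rw [phaseLayer_apply, hadamardLayer_apply_of_forall_mem hl hmem, ← List.prod_toFinset _ hl,
    toFinset_eq_univ_of_forall_mem hmem]
  simp only [fiberKet_elim, mul_ite, mul_zero, Fintype.sum_ite_eq', tensP, plusAll]
  exact mul_left_comm _ _ _

end Layers

theorem CNZ_recursion_step_general {ι : Type} [DecidableEq ι] (m : ℕ)
    (S : Fin m → Finset ι) (ψ : QState ι) :
    seqComp ((List.finRange m).map fun j =>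
        Cgate (insert (Sum.inl j)
          ((S j).map ⟨Sum.inr, Sum.inr_injective⟩ : Finset (Fin m ⊕ ι))))
      (seqComp ((List.finRange m).map fun j => Hgate (Sum.inl j : Fin m ⊕ ι))
        (Cgate ((Finset.univ : Finset (Fin m)).map ⟨Sum.inl, Sum.inl_injective⟩)
          (seqComp ((List.finRange m).map fun j => Hgate (Sum.inl j : Fin m ⊕ ι))
            (seqComp ((List.finRange m).map fun j =>
                Cgate (insert (Sum.inl j)
                  ((S j).map ⟨Sum.inr, Sum.inr_injective⟩ : Finset (Fin m ⊕ ι))))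
              (tensP (plusAll (Fin m)) ψ))))) =
      tensP (plusAll (Fin m)) (Cgate (Finset.univ.biUnion S) ψ) := by
  have hl := List.nodup_finRange m
  have hmem : ∀ j, j ∈ List.finRange m := List.mem_finRange
  change phaseLayer S _ (hadamardLayer _ (Cgate _ (hadamardLayer _ (phaseLayer S _ _)))) = _
  rw [phaseLayer_tensP_plusAll hl hmem, hadamardLayer_hadamardLayer hl hmem,
    Cgate_fiberKet_bitProd, ← phaseLayer_tensP_plusAll hl hmem, phaseLayer_phaseLayer]

/-- Let `a₁,…,a_m` (`m ≥ 1`) be distinct ancilla qubits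
(here `Sum.inl j`, `j : Fin m`) and `S₁,…,S_m` pairwise disjoint nonempty
finite sets of target qubit labels (here embedded via `Sum.inr`, hence
automatically disjoint from the ancillas).  Then for every state `ψ` of the
targets,
`(∏_j C_{{a_j}∪S_j}) (∏_j H_{a_j}) C_{{a₁,…,a_m}} (∏_j H_{a_j})
  (∏_j C_{{a_j}∪S_j}) (|+⟩_{a₁} ⊗ ⋯ ⊗ |+⟩_{a_m} ⊗ |ψ⟩)
  = |+⟩_{a₁} ⊗ ⋯ ⊗ |+⟩_{a_m} ⊗ C_{S₁∪⋯∪S_m} |ψ⟩`. -/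
theorem CNZ_recursion_step {ι : Type} [DecidableEq ι] (m : ℕ) (hm : 1 ≤ m)
    (S : Fin m → Finset ι) (hne : ∀ j, (S j).Nonempty)
    (hdisj : ∀ j k, j ≠ k → Disjoint (S j) (S k)) (ψ : QState ι) :
    seqComp ((List.finRange m).map fun j =>
        Cgate (insert (Sum.inl j)
          ((S j).map ⟨Sum.inr, Sum.inr_injective⟩ : Finset (Fin m ⊕ ι))))
      (seqComp ((List.finRange m).map fun j => Hgate (Sum.inl j : Fin m ⊕ ι))
        (Cgate ((Finset.univ : Finset (Fin m)).map ⟨Sum.inl, Sum.inl_injective⟩)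
          (seqComp ((List.finRange m).map fun j => Hgate (Sum.inl j : Fin m ⊕ ι))
            (seqComp ((List.finRange m).map fun j =>
                Cgate (insert (Sum.inl j)
                  ((S j).map ⟨Sum.inr, Sum.inr_injective⟩ : Finset (Fin m ⊕ ι))))
              (tensP (plusAll (Fin m)) ψ))))) =
      tensP (plusAll (Fin m)) (Cgate (Finset.univ.biUnion S) ψ) :=
  CNZ_recursion_step_general m S ψ
end
end

section
/- On nine qubits labeled 1,…,9, for every state |ψ⟩ = ∑_{y∈{0,1}³} ψ_y |y⟩ of qubits 1,2,3, projecting qubits 1,…,6 onto ⟨+|^{⊗6} in the state obtained by applying the hyperedge C_{{1,2,3}} and the graph edges {i,i+3} and {i+3,i+6} (i = 1,2,3) to |ψ⟩ on qubits 1,2,3 and |+⟩ on qubits 4,…,9 teleports CCZ|ψ⟩ to qubits 7,8,9: ( ⟨+|^{⊗6}_{1,…,6} ⊗ I ) ∏_{i=1}^{3} C_{{i,i+3}} C_{{i+3,i+6}} · C_{{1,2,3}} ( |ψ⟩_{123} ⊗ |+⟩^{⊗6}_{4,…,9} ) = (1/8) ∑_{y∈{0,1}³} (−1)^{y₁y₂y₃}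 ψ_y |y⟩_{789}. This is the all-plus-outcome (byproduct-free) case of the measurement pattern implementing the nearest-neighbor logical CCZ gate in the MBQC scheme of Appendix B. -/
noncomputable section

/-- Qubit `i` of the input block 1,2,3 (for `i : Fin 3`, qubit `i+1`). -/
def qA (i : Fin 3) : (Fin 3 ⊕ Fin 3) ⊕ Fin 3 := Sum.inl (Sum.inl i)
/-- Qubit `i` of the middle block 4,5,6. -/
def qB (i : Fin 3) : (Fin 3 ⊕ Fin 3) ⊕ Fin 3 := Sum.inl (Sum.inr i)
/-- Qubit `i` of the output block 7,8,9. -/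
def qC (i : Fin 3) : (Fin 3 ⊕ Fin 3) ⊕ Fin 3 := Sum.inr i

/-! The gates factor the amplitude of `|a⟩₁₂₃|m⟩₄₅₆|y⟩₇₈₉` as the CCZ phase `(−1)^{a₀a₁a₂}`
times one CZ chain `(−1)^{aᵢmᵢ}(−1)^{mᵢyᵢ}` per `i`. Projecting the middle qubit of a chain
onto `⟨+|` sums over `mᵢ`, and `∑ₘ (−1)^{am + my} = 2 δ_{a,y}`: each chain is a wire from
qubit `i` to qubit `i + 6`. Projecting the input qubits onto `⟨+|` then reads off the input
at `a = y`, with normalization `2^{-3} · 2^{-3} · 2³ = 1/8`. -/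

def zSign (b : Bool) : ℂ := if b then -1 else 1

lemma csign_pair {ι : Type} [DecidableEq ι] (i j : ι) (x : ι → Bool) :
    csign {i, j} x = zSign (x i && x j) := by
  simp [csign, zSign]

lemma csign_triple {ι : Type} [DecidableEq ι] (i j k : ι) (x : ι → Bool) :
    csign {i, j, k} x = zSign (x i && (x j && x k)) := by
  simp [csign, zSign]

lemma sum_sumElim {κ ι : Type} [Fintype κ] [Fintype ι] [DecidableEq κ] [DecidableEq ι]
    (f : (κ ⊕ ι → Bool) → ℂ) :
    ∑ x, f x = ∑ a : κ → Bool, ∑ b : ι → Bool, f (Sum.elim a b) := by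
  rw [← Fintype.sum_prod_type']
  exact Fintype.sum_equiv (Equiv.sumArrowEquivProdArrow _ _ _) _ _
    fun x => congrArg f (Sum.elim_comp_inl_inr x).symm

lemma pinner_xketS_false {κ ι : Type} [Fintype κ] [DecidableEq κ] (w : QState (κ ⊕ ι))
    (y : ι → Bool) :
    pinner (xketS fun _ => false) w y =
      (((Real.sqrt 2)⁻¹ : ℝ) : ℂ) ^ Fintype.card κ * ∑ b, w (Sum.elim b y) := by
  simp [pinner, xketS, Finset.mul_sum]

lemma sum_zSign_chain (u v : Bool) :
    ∑ b, zSign (u && b) * zSign (b && v) = if u = v then 2 else 0 := by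
  cases u <;> cases v <;> norm_num [zSign]

lemma sum_prod_zSign_chain {ι : Type} [Fintype ι] [DecidableEq ι] (a y : ι → Bool) :
    ∑ m : ι → Bool, ∏ i, zSign (a i && m i) * zSign (m i && y i) =
      if a = y then 2 ^ Fintype.card ι else 0 := by
  rw [← Fintype.prod_sum fun i b => zSign (a i && b) * zSign (b && y i)]
  simp only [sum_zSign_chain]
  split_ifs with h
  · simp [h]
  · obtain ⟨i, hi⟩ := Function.ne_iff.mp h
    exact Finset.prod_eq_zero (Finset.mem_univ i) (if_neg hi)

lemma ofReal_inv_sqrt_two_pow_two_mul (n : ℕ) :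
    (((Real.sqrt 2)⁻¹ : ℝ) : ℂ) ^ (2 * n) = 2⁻¹ ^ n := by
  rw [← Complex.ofReal_pow, pow_mul, inv_pow, Real.sq_sqrt zero_le_two]
  norm_num

/-- On nine qubits, applying `C_{{1,2,3}}` and the graph
edges `{i,i+3}`, `{i+3,i+6}` (`i = 1,2,3`) to `|ψ⟩ = ∑_y ψ_y |y⟩` on qubits
1,2,3 and `|+⟩` on qubits 4,…,9, and then projecting qubits 1,…,6 onto
`⟨+|^{⊗6}`, teleports `CCZ|ψ⟩` to qubits 7,8,9:
`(⟨+|^{⊗6}_{1..6} ⊗ I) ∏_i C_{{i,i+3}} C_{{i+3,i+6}} · C_{{1,2,3}}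
  (|ψ⟩_{123} ⊗ |+⟩^{⊗6}_{4..9}) = (1/8) ∑_y (−1)^{y₁y₂y₃} ψ_y |y⟩_{789}`. -/
theorem CCZnn_teleportation_all_plus (c : (Fin 3 → Bool) → ℂ) :
    pinner (xketS (fun _ : Fin 3 ⊕ Fin 3 => false))
      (Cgate {qA 0, qB 0} (Cgate {qB 0, qC 0}
        (Cgate {qA 1, qB 1} (Cgate {qB 1, qC 1}
          (Cgate {qA 2, qB 2} (Cgate {qB 2, qC 2}
            (Cgate {qA 0, qA 1, qA 2}
              (fun x => c (fun i => x (qA i)) *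
                (((Real.sqrt 2)⁻¹ : ℝ) : ℂ) ^ 6)))))))) =
      fun y : Fin 3 → Bool =>
        (8 : ℂ)⁻¹ * ((if y 0 && (y 1 && y 2) then (-1 : ℂ) else 1) * c y) := by
  funext y
  set s : ℂ := (((Real.sqrt 2)⁻¹ : ℝ) : ℂ)
  have amplitude (a m : Fin 3 → Bool) :
      (Cgate {qA 0, qB 0} (Cgate {qB 0, qC 0}
        (Cgate {qA 1, qB 1} (Cgate {qB 1, qC 1}
          (Cgate {qA 2, qB 2} (Cgate {qB 2, qC 2}
            (Cgate {qA 0, qA 1, qA 2}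
              (fun x => c (fun i => x (qA i)) * s ^ 6))))))) (Sum.elim (Sum.elim a m) y))
        = s ^ 6 * zSign (a 0 && (a 1 && a 2)) * c a *
            ∏ i, zSign (a i && m i) * zSign (m i && y i) := by
    simp only [Cgate, csign_pair, csign_triple, Fin.prod_univ_three]
    simp only [qA, qB, qC, Sum.elim_inl, Sum.elim_inr]
    ring
  rw [pinner_xketS_false, sum_sumElim]
  simp only [amplitude, ← Finset.mul_sum, sum_prod_zSign_chain, mul_ite, mul_zero,
    Finset.sum_ite_eq', Finset.mem_univ, if_true, Fintype.card_sum, Fintype.card_fin]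
  rw [show (if y 0 && (y 1 && y 2) then (-1 : ℂ) else 1) = zSign (y 0 && (y 1 && y 2)) from rfl]
  linear_combination (8 * zSign (y 0 && (y 1 && y 2)) * c y) * ofReal_inv_sqrt_two_pow_two_mul 6
end
end
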